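/- Every finite 2-group of order at most 128 whose abelianization is isomorphic to (ℤ/4ℤ) × (ℤ/4ℤ) is metabelian, and there exists a finite 2-group of order 256 whose abelianization is isomorphic to (ℤ/4ℤ) × (ℤ/4ℤ) and whose derived length equals 3. In other words, the minimal order of a non-metabelian finite 2-group with abelianization (ℤ/4ℤ) × (ℤ/4ℤ) is 256. -/

import Mathlib

/-!
Let `G` be a finite 2-group with `G/G' ≅ C₄ × C₄`, and let `a, b` generate `G` modulo `G'`.
Modulo `γ₃` the subgroup `G'` is central and generated by `[a, b]`, so `G' = ⟨[a, b]⟩γ₃` and,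
by the three subgroups lemma, `G'' ≤ [γ₂, γ₃] ≤ γ₅`. Since `G` is nilpotent, `G'' ≠ 1` forces
`γ₂ > γ₃ > γ₄ > γ₅ > 1`, so `|G'| ≥ 2⁴` and `|G| = 16 |G'| ≥ 256`.

The bound is attained by an explicit group of order 256 in which `G'` has order 16 and `G''`
order 2; its properties are checked by finite computation.
-/

open scoped commutatorElement

namespace Subgroup

variable {G : Type*} [Group G]

theorem commutator_sup_sup_eq_bot {K₁ K₂ : Subgroup G} (h₁ : ⁅K₁, K₁⁆ = ⊥) (h₂ : ⁅K₂, K₂⁆ = ⊥)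
    (h₁₂ : ⁅K₁, K₂⁆ = ⊥) : ⁅K₁ ⊔ K₂, K₁ ⊔ K₂⁆ = ⊥ := by
  rw [commutator_eq_bot_iff_le_centralizer] at *
  have hK₁ : K₁ ⊔ K₂ ≤ centralizer K₁ := sup_le h₁ (le_centralizer_iff.mp h₁₂)
  have hK₂ : K₁ ⊔ K₂ ≤ centralizer K₂ := sup_le h₁₂ h₂
  exact sup_le (le_centralizer_iff.mp hK₁) (le_centralizer_iff.mp hK₂)

theorem commutator_le_iff_map_eq_bot {H₁ H₂ N : Subgroup G} [N.Normal] :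
    ⁅H₁, H₂⁆ ≤ N ↔ ⁅H₁.map (QuotientGroup.mk' N), H₂.map (QuotientGroup.mk' N)⁆ = ⊥ := by
  rw [← map_commutator, map_eq_bot_iff, QuotientGroup.ker_mk']

theorem commutator_sup_sup_le {K₁ K₂ N : Subgroup G} [N.Normal] (h₁ : ⁅K₁, K₁⁆ ≤ N)
    (h₂ : ⁅K₂, K₂⁆ ≤ N) (h₁₂ : ⁅K₁, K₂⁆ ≤ N) : ⁅K₁ ⊔ K₂, K₁ ⊔ K₂⁆ ≤ N := by
  rw [commutator_le_iff_map_eq_bot] at *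
  rw [map_sup]
  exact commutator_sup_sup_eq_bot h₁ h₂ h₁₂

theorem commutator_commutator_le_of_rotate {H₁ H₂ H₃ N : Subgroup G} [N.Normal]
    (h₁ : ⁅⁅H₂, H₃⁆, H₁⁆ ≤ N) (h₂ : ⁅⁅H₃, H₁⁆, H₂⁆ ≤ N) : ⁅⁅H₁, H₂⁆, H₃⁆ ≤ N := by
  rw [commutator_le_iff_map_eq_bot, map_commutator] at *
  exact commutator_commutator_eq_bot_of_rotate h₁ h₂

theorem commutator_lowerCentralSeries_le (m n : ℕ) :
    ⁅(⊤ : Subgroup G).lowerCentralSeries m, (⊤ : Subgroup G).lowerCentralSeries n⁆ ≤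
      (⊤ : Subgroup G).lowerCentralSeries (m + n + 1) := by
  induction n generalizing m with
  | zero => rfl
  | succ n ih =>
    rw [lowerCentralSeries_succ, commutator_comm]
    apply commutator_commutator_le_of_rotate
    · rw [commutator_comm ⊤, ← lowerCentralSeries_succ]
      exact (ih (m + 1)).trans_eq (congrArg _ (by omega))
    · exact (commutator_mono (ih m) le_rfl).trans_eq (lowerCentralSeries_succ _ _).symm

theorem commutator_closure_pair_le {N : Subgroup G} [N.Normal] {a b : G} (hab : ⁅a, b⁆ ∈ N) :
    ⁅closure {a, b}, closure {a, b}⁆ ≤ N := by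
  rw [commutator_le_iff_map_eq_bot, MonoidHom.map_closure, Set.image_pair,
    commutator_self_eq_bot_iff]
  have hcomm : Commute (QuotientGroup.mk' N a) (QuotientGroup.mk' N b) := by
    rwa [← commutatorElement_eq_one_iff_commute, ← map_commutatorElement,
      ← MonoidHom.mem_ker, QuotientGroup.ker_mk']
  apply isMulCommutative_closure
  simp only [Set.mem_insert_iff, Set.mem_singleton_iff]
  rintro x (rfl | rfl) y (rfl | rfl)
  exacts [rfl, hcomm, hcomm.symm, rfl]

theorem commutator_le_of_closure_pair_sup_eq_top {N : Subgroup G} [N.Normal] {a b : G}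
    (hgen : closure {a, b} ⊔ _root_.commutator G = ⊤) (hab : ⁅a, b⁆ ∈ N)
    (hN : (⊤ : Subgroup G).lowerCentralSeries 2 ≤ N) : _root_.commutator G ≤ N := by
  have hG' (K : Subgroup G) : ⁅K, _root_.commutator G⁆ ≤ N := by
    refine (commutator_mono le_top le_rfl).trans ?_
    rwa [commutator_comm, ← top_lowerCentralSeries_one, ← lowerCentralSeries_succ]
  have h := commutator_sup_sup_le (commutator_closure_pair_le hab) (hG' _) (hG' _)
  rw [hgen] at h
  exact h

-- `(⊤ : Subgroup G).lowerCentralSeries n` is `γₙ₊₁`, so this is `G'' ≤ γ₅`.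
theorem derivedSeries_two_le_lowerCentralSeries_four {a b : G}
    (hgen : closure {a, b} ⊔ _root_.commutator G = ⊤) :
    derivedSeries G 2 ≤ (⊤ : Subgroup G).lowerCentralSeries 4 := by
  set H := zpowers ⁅a, b⁆ ⊔ (⊤ : Subgroup G).lowerCentralSeries 2
  have hH : H ≤ (⊤ : Subgroup G).lowerCentralSeries 1 := by
    refine sup_le (zpowers_le.mpr ?_) (lowerCentralSeries_antitone _ (by norm_num))
    rw [top_lowerCentralSeries_one]
    exact commutator_mem_commutator (mem_top a) (mem_top b)
  have : H.Normal := commutator_top_left_le_iff.mp <| calc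
    ⁅⊤, H⁆ ≤ ⁅⊤, (⊤ : Subgroup G).lowerCentralSeries 1⁆ := commutator_mono le_rfl hH
    _ = (⊤ : Subgroup G).lowerCentralSeries 2 := commutator_comm _ _
    _ ≤ H := le_sup_right
  have hG' : _root_.commutator G ≤ H :=
    commutator_le_of_closure_pair_sup_eq_top hgen (mem_sup_left (mem_zpowers _)) le_sup_right
  have hL (K : Subgroup G) (hK : K ≤ H) :
      ⁅K, (⊤ : Subgroup G).lowerCentralSeries 2⁆ ≤ (⊤ : Subgroup G).lowerCentralSeries 4 :=
    (commutator_mono (hK.trans hH) le_rfl).trans (commutator_lowerCentralSeries_le 1 2)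
  calc derivedSeries G 2 = ⁅_root_.commutator G, _root_.commutator G⁆ := by
        rw [derivedSeries_succ, derivedSeries_one]
    _ ≤ ⁅H, H⁆ := commutator_mono hG' hG'
    _ ≤ (⊤ : Subgroup G).lowerCentralSeries 4 := by
      refine commutator_sup_sup_le ?_ (hL _ le_sup_right) (hL _ le_sup_left)
      rw [commutator_self_eq_bot_iff.mpr inferInstance]
      exact bot_le

theorem lowerCentralSeries_succ_lt [Group.IsNilpotent G] {n : ℕ}
    (h : (⊤ : Subgroup G).lowerCentralSeries n ≠ ⊥) :
    (⊤ : Subgroup G).lowerCentralSeries (n + 1) < (⊤ : Subgroup G).lowerCentralSeries n := by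
  refine lt_of_le_of_ne (lowerCentralSeries_antitone _ n.le_succ) fun hstable => h ?_
  have hconst (k : ℕ) :
      (⊤ : Subgroup G).lowerCentralSeries (n + k) = (⊤ : Subgroup G).lowerCentralSeries n := by
    induction k with
    | zero => rfl
    | succ k ih => rw [← add_assoc, lowerCentralSeries_succ, ih, ← lowerCentralSeries_succ, hstable]
  obtain ⟨k, hk⟩ := nilpotent_iff_lowerCentralSeries.mp ‹_›
  rw [← hconst k, eq_bot_iff, ← hk]
  exact lowerCentralSeries_antitone _ (Nat.le_add_left k n)

theorem two_mul_card_le_card_of_lt [Finite G] {H K : Subgroup G} (h : H < K) :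
    2 * Nat.card H ≤ Nat.card K := by
  obtain ⟨d, hd⟩ := card_dvd_of_le h.le
  have hd₀ : d ≠ 0 := by rintro rfl; exact Nat.card_pos.ne' (hd.trans (mul_zero _))
  have hd₁ : d ≠ 1 := by
    rintro rfl; exact h.ne (eq_of_le_of_card_ge h.le (by rw [hd, mul_one]))
  rw [hd, mul_comm]
  exact Nat.mul_le_mul_left _ (by omega)

theorem two_pow_succ_le_card_lowerCentralSeries [Finite G] [Group.IsNilpotent G] {m n : ℕ}
    (h : (⊤ : Subgroup G).lowerCentralSeries (m + n) ≠ ⊥) :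
    2 ^ (n + 1) ≤ Nat.card ((⊤ : Subgroup G).lowerCentralSeries m) := by
  induction n generalizing m with
  | zero => exact (one_lt_card_iff_ne_bot _).mpr h
  | succ n ih =>
    have hm : (⊤ : Subgroup G).lowerCentralSeries m ≠ ⊥ := fun hm =>
      h (le_bot_iff.mp (hm ▸ lowerCentralSeries_antitone _ (Nat.le_add_right m _)))
    calc 2 ^ (n + 1 + 1) = 2 * 2 ^ (n + 1) := by ring
      _ ≤ 2 * Nat.card ((⊤ : Subgroup G).lowerCentralSeries (m + 1)) :=
        Nat.mul_le_mul_left _ (ih (by rwa [add_right_comm, add_assoc]))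
      _ ≤ Nat.card ((⊤ : Subgroup G).lowerCentralSeries m) :=
        two_mul_card_le_card_of_lt (lowerCentralSeries_succ_lt hm)

theorem sixteen_le_card_commutator [Finite G] [Group.IsNilpotent G] {a b : G}
    (hgen : closure {a, b} ⊔ _root_.commutator G = ⊤) (h : derivedSeries G 2 ≠ ⊥) :
    16 ≤ Nat.card (_root_.commutator G) := by
  have h₄ : (⊤ : Subgroup G).lowerCentralSeries (1 + 3) ≠ ⊥ := fun h₄ =>
    h (le_bot_iff.mp ((derivedSeries_two_le_lowerCentralSeries_four hgen).trans h₄.le))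
  have := two_pow_succ_le_card_lowerCentralSeries h₄
  rwa [top_lowerCentralSeries_one] at this

open Multiplicative in
theorem closure_ofAdd_pair_eq_top (n : ℕ) :
    closure {ofAdd ((1 : ZMod n), (0 : ZMod n)), ofAdd ((0 : ZMod n), (1 : ZMod n))} = ⊤ := by
  refine (eq_top_iff' _).mpr fun z => ?_
  have hz : z = ofAdd ((1 : ZMod n), (0 : ZMod n)) ^ ((toAdd z).1.cast : ℤ) *
      ofAdd ((0 : ZMod n), (1 : ZMod n)) ^ ((toAdd z).2.cast : ℤ) := by
    apply toAdd.injective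
    ext <;> simp
  rw [hz]
  exact mul_mem (zpow_mem (subset_closure (by simp)) _) (zpow_mem (subset_closure (by simp)) _)

theorem exists_closure_pair_sup_commutator_eq_top {n : ℕ}
    (e : Abelianization G ≃* Multiplicative (ZMod n × ZMod n)) :
    ∃ a b : G, closure {a, b} ⊔ _root_.commutator G = ⊤ := by
  have hgen := closure_ofAdd_pair_eq_top n
  obtain ⟨a, ha⟩ := Quot.exists_rep (e.symm (Multiplicative.ofAdd (1, 0)))
  obtain ⟨b, hb⟩ := Quot.exists_rep (e.symm (Multiplicative.ofAdd (0, 1)))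
  refine ⟨a, b, ?_⟩
  rw [← Abelianization.ker_of, ← comap_map_eq, MonoidHom.map_closure, Set.image_pair,
    ← Abelianization.mk_eq_of, ← Abelianization.mk_eq_of, ha, hb, ← Set.image_pair e.symm,
    ← MonoidHom.coe_coe, ← MonoidHom.map_closure, hgen, map_top_of_surjective _ e.symm.surjective,
    comap_top]

theorem sixteen_mul_sq_le_card [Finite G] [Group.IsNilpotent G] {n : ℕ}
    (e : Abelianization G ≃* Multiplicative (ZMod n × ZMod n)) (h : derivedSeries G 2 ≠ ⊥) :
    16 * n ^ 2 ≤ Nat.card G := by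
  obtain ⟨a, b, hgen⟩ := exists_closure_pair_sup_commutator_eq_top e
  have hcard : Nat.card (Abelianization G) = n ^ 2 := by
    rw [Nat.card_congr e.toEquiv, Nat.card_congr Multiplicative.toAdd, Nat.card_prod,
      Nat.card_zmod, sq]
  rw [card_eq_card_quotient_mul_card_subgroup (_root_.commutator G)]
  change 16 * n ^ 2 ≤ Nat.card (Abelianization G) * _
  rw [hcard, mul_comm]
  exact Nat.mul_le_mul_left _ (sixteen_le_card_commutator hgen h)

end Subgroup

instance {N G : Type*} [Group N] [Group G] {φ : G →* MulAut N} [DecidableEq N] [DecidableEq G] :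
    DecidableEq (N ⋊[φ] G) :=
  SemidirectProduct.equivProd.decidableEq

instance {N G : Type*} [Group N] [Group G] {φ : G →* MulAut N} [Fintype N] [Fintype G] :
    Fintype (N ⋊[φ] G) :=
  Fintype.ofEquiv _ SemidirectProduct.equivProd.symm

def zmodPowHom {M : Type*} [Monoid M] {n : ℕ} [NeZero n] (x : M) (hx : x ^ n = 1) :
    Multiplicative (ZMod n) →* M where
  toFun k := x ^ (Multiplicative.toAdd k).val
  map_one' := by simp
  map_mul' a b := by rw [toAdd_mul, ZMod.val_add, ← pow_eq_pow_mod _ hx, pow_add]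

namespace TwoGroup256

open Multiplicative SemidirectProduct

abbrev C := Multiplicative (ZMod 4)
abbrev A := Multiplicative (ZMod 4 × ZMod 4)

/- `G = (A ⋊ ⟨t⟩) ⋊ ⟨c⟩` with `A = ⟨e₁, e₂⟩ ≅ C₄²`, `t, c` of order 4, `t` acting on `A` by
`(x, y) ↦ (y, x + 2y)`, and `c` swapping `e₁, e₂` and sending `t ↦ e₂ t⁻¹`. -/

def conjT : MulAut A := AddEquiv.toMultiplicative
  { toFun p := (p.2, p.1 + 2 * p.2)
    invFun p := (p.2 - 2 * p.1, p.1)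
    left_inv p := by ext <;> simp
    right_inv p := by ext <;> simp
    map_add' p q := Prod.ext rfl (by simp only [Prod.fst_add, Prod.snd_add]; ring) }

theorem conjT_pow_four : conjT ^ 4 = 1 :=
  MulEquiv.ext (by decide)

abbrev N := A ⋊[zmodPowHom conjT conjT_pow_four] C

def conjCHom : N →* N :=
  lift (inl.comp (AddEquiv.prodComm : ZMod 4 × ZMod 4 ≃+ _).toMultiplicative.toMonoidHom)
    (zmodPowHom (⟨ofAdd (0, 1), ofAdd 3⟩ : N) (by decide)) fun s =>
      MonoidHom.ext (by revert s; decide)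

def conjC : MulAut N :=
  { conjCHom with
    invFun a := conjCHom (conjCHom (conjCHom a))
    left_inv := by intro a; revert a; decide
    right_inv := by intro a; revert a; decide }

theorem conjC_pow_four : conjC ^ 4 = 1 :=
  MulEquiv.ext (by decide)

abbrev G := N ⋊[zmodPowHom conjC conjC_pow_four] C

def c : G := inr (ofAdd 1)
def t : G := inl (inr (ofAdd 1))
def e₁ : G := inl (inl (ofAdd (1, 0)))
def e₂ : G := inl (inl (ofAdd (0, 1)))

def twiceSum : A →* C := AddMonoidHom.toMultiplicative
  { toFun p := 2 * (p.1 + p.2)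
    map_zero' := by simp
    map_add' p q := by simp only [Prod.fst_add, Prod.snd_add]; ring }

def theta : N →* C :=
  lift twiceSum (MonoidHom.id C) fun s => MonoidHom.ext (by revert s; decide)

/-- The abelianization map: `c ↦ (1, 0)`, `t ↦ (0, 1)`, `e₁, e₂ ↦ (0, 2)`. -/
def toAb : G →* C × C :=
  lift ((MonoidHom.inr C C).comp theta) (MonoidHom.inl C C) fun s =>
    MonoidHom.ext (by revert s; decide)

theorem toAb_apply (x : G) : toAb x = (x.right, theta x.left) := by
  simp [toAb, lift]

theorem toAb_surjective : Function.Surjective toAb := fun ⟨a, b⟩ =>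
  ⟨⟨⟨1, b⟩, a⟩, by rw [toAb_apply]; simp [theta, lift]⟩

theorem mem_ker_toAb {x : G} (hx : x ∈ toAb.ker) : x = inl x.left ∧ theta x.left = 1 := by
  rw [MonoidHom.mem_ker, toAb_apply, Prod.mk_eq_one] at hx
  exact ⟨SemidirectProduct.ext rfl hx.1, hx.2⟩

set_option maxRecDepth 10000 in
theorem exists_inl_eq_commutator_pow_mul : ∀ n : N, theta n = 1 → ∃ i j k : Fin 4,
    inl n = ⁅c, t⁆ ^ (i : ℕ) * ⁅e₁, t * c⁆ ^ (j : ℕ) * ⁅t, e₂ * c⁆ ^ (k : ℕ) := by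
  decide

theorem commutator_eq_ker_toAb : commutator G = toAb.ker := by
  refine le_antisymm (Abelianization.commutator_subset_ker toAb) fun x hx => ?_
  obtain ⟨hx, hθ⟩ := mem_ker_toAb hx
  obtain ⟨i, j, k, h⟩ := exists_inl_eq_commutator_pow_mul _ hθ
  have hmem (g h : G) : ⁅g, h⁆ ∈ commutator G :=
    Subgroup.commutator_mem_commutator (Subgroup.mem_top g) (Subgroup.mem_top h)
  rw [hx, h]
  exact mul_mem (mul_mem (pow_mem (hmem _ _) _) (pow_mem (hmem _ _) _)) (pow_mem (hmem _ _) _)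

noncomputable def abelianizationEquiv : Abelianization G ≃* Multiplicative (ZMod 4 × ZMod 4) :=
  (QuotientGroup.quotientMulEquivOfEq commutator_eq_ker_toAb).trans <|
    (QuotientGroup.quotientKerEquivOfSurjective toAb toAb_surjective).trans
      (MulEquiv.prodMultiplicative (ZMod 4) (ZMod 4)).symm

def k₀ : N := inl (ofAdd (2, 2))

set_option maxRecDepth 10000 in
theorem commutator_eq_one_or_eq_k₀ :
    ∀ a b : N, theta a = 1 → theta b = 1 → ⁅a, b⁆ = 1 ∨ ⁅a, b⁆ = k₀ := by
  decide

theorem derivedSeries_two_le_zpowers : derivedSeries G 2 ≤ Subgroup.zpowers (inl k₀) := by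
  rw [derivedSeries_succ, derivedSeries_one, commutator_eq_ker_toAb, Subgroup.commutator_le]
  intro x hx y hy
  obtain ⟨hx, hθx⟩ := mem_ker_toAb hx
  obtain ⟨hy, hθy⟩ := mem_ker_toAb hy
  rw [hx, hy, ← map_commutatorElement]
  rcases commutator_eq_one_or_eq_k₀ _ _ hθx hθy with h | h <;> rw [h]
  · exact one_mem _
  · exact Subgroup.mem_zpowers _

theorem derivedSeries_three_eq_bot : derivedSeries G 3 = ⊥ := by
  have h := derivedSeries_two_le_zpowers
  rw [derivedSeries_succ, eq_bot_iff]
  refine (Subgroup.commutator_mono h h).trans ?_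
  rw [Subgroup.commutator_self_eq_bot_iff.mpr inferInstance]

theorem commutator_commutator_ne_one : ⁅⁅c, t⁆, ⁅t, e₂ * c⁆⁆ ≠ 1 := by
  decide

theorem derivedSeries_two_ne_bot : derivedSeries G 2 ≠ ⊥ := by
  have hmem : ⁅⁅c, t⁆, ⁅t, e₂ * c⁆⁆ ∈ derivedSeries G 2 := by
    rw [derivedSeries_succ, derivedSeries_one]
    exact Subgroup.commutator_mem_commutator
      (Subgroup.commutator_mem_commutator (Subgroup.mem_top _) (Subgroup.mem_top _))
      (Subgroup.commutator_mem_commutator (Subgroup.mem_top _) (Subgroup.mem_top _))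
  exact fun h => commutator_commutator_ne_one (Subgroup.mem_bot.mp (h ▸ hmem))

theorem card_eq : Nat.card G = 256 := by
  rw [SemidirectProduct.card, SemidirectProduct.card]
  simp

universe u

theorem exists_grpCat : ∃ H : GrpCat.{u}, Nat.card H = 256 ∧
    Nonempty (Abelianization H ≃* Multiplicative (ZMod 4 × ZMod 4)) ∧
    derivedSeries H 3 = ⊥ ∧ derivedSeries H 2 ≠ ⊥ := by
  let e : ULift.{u} G ≃* G := MulEquiv.ulift
  have hmap (n : ℕ) :
      derivedSeries (ULift.{u} G) n = (derivedSeries G n).map e.symm.toMonoidHom :=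
    (map_derivedSeries_eq e.symm.surjective n).symm
  refine ⟨GrpCat.of (ULift.{u} G), ?_, ⟨e.abelianizationCongr.trans abelianizationEquiv⟩, ?_, ?_⟩
  · exact Nat.card_ulift G ▸ card_eq
  · rw [hmap, derivedSeries_three_eq_bot, Subgroup.map_bot]
  · rw [hmap, Ne, Subgroup.map_eq_bot_iff_of_injective _ e.symm.injective]
    exact derivedSeries_two_ne_bot

end TwoGroup256

theorem stmt5 :
    (∀ (G : Type) [Group G] [Finite G], (∃ n : ℕ, Nat.card G = 2 ^ n) →
      Nat.card G ≤ 128 →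
      Nonempty (Abelianization G ≃* Multiplicative (ZMod 4 × ZMod 4)) →
      derivedSeries G 2 = ⊥) ∧
    (∃ (G : GrpCat), Nat.card G = 256 ∧
      Nonempty (Abelianization G ≃* Multiplicative (ZMod 4 × ZMod 4)) ∧
      derivedSeries G 3 = ⊥ ∧ derivedSeries G 2 ≠ ⊥) ∧
    (∀ (G : Type) [Group G] [Finite G], (∃ n : ℕ, Nat.card G = 2 ^ n) →
      Nonempty (Abelianization G ≃* Multiplicative (ZMod 4 × ZMod 4)) →
      derivedSeries G 2 ≠ ⊥ → 256 ≤ Nat.card G) := by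
  have lower_bound (G : Type) [Group G] [Finite G] (hG : ∃ n : ℕ, Nat.card G = 2 ^ n)
      (he : Nonempty (Abelianization G ≃* Multiplicative (ZMod 4 × ZMod 4)))
      (h : derivedSeries G 2 ≠ ⊥) : 256 ≤ Nat.card G := by
    obtain ⟨n, hn⟩ := hG
    obtain ⟨e⟩ := he
    have := (IsPGroup.of_card hn).isNilpotent
    simpa using Subgroup.sixteen_mul_sq_le_card e h
  refine ⟨fun G _ _ hG hcard he => ?_, TwoGroup256.exists_grpCat, lower_bound⟩
  by_contra h
  have := lower_bound G hG he h
  omega
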